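/- arXiv:2109.09945 — 8 statements merged into one kernel-verified Lean document; each statement's English description precedes it below -/
import Mathlib

section
/- Let C₀, K₀, f, ω, k be real numbers with ω ≠ 0 and ω² ≠ 1. Set b∞ = K₀·sin f − cos f, and define the CCTWT dispersion function D(ω,k) = C₀·sin ω·(b∞ + cos(ω−k)) + (1/ω)·[2(cos k − cos ω)·b∞ + cos(2k−ω) − cos(k−2ω) + cos ω − cos k] + (1/ω²)·[C₀·sin ω·(cos f − cos(k−ω))], the CCS dispersion function D_C(ω,k) = C₀·sin ω + 2(cos k − cos ω)/ω − C₀·sin ω/ω², and the MCK dispersion function D_K(ω,k) = cos(ω−k) + b∞ + K₀/(ω²−1). Then D(ω,k) − D_C(ω,k)·D_K(ω,k) = (K₀/ω)·[ 2(cos ω − cos k)/(ω²−1) − C₀·sin ω·(1 − sin f)/ω ]. -/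
/-!
Expanding `D_C · D_K`, every term of `D` cancels except three. The `b∞`-terms of `1/ω²` leave
`C₀ sin ω (cos f + b∞) / ω² = C₀ K₀ sin ω sin f / ω²`, and `C₀ sin ω (1 - 1/ω²) · K₀/(ω² - 1)`
simplifies to `C₀ K₀ sin ω / ω²`. The only trigonometry needed is the product-to-sum identity
`2 (cos k - cos ω) cos (ω - k) = cos (2k - ω) - cos (k - 2ω) + cos ω - cos k`, which matches the
`1/ω` bracket of `D` against `2 (cos k - cos ω)/ω · cos (ω - k)` in `D_C · D_K`.
-/

open Real

lemma two_mul_cos_sub_cos_mul_cos_sub (ω k : ℝ) :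
    2 * (cos k - cos ω) * cos (ω - k)
      = cos (2 * k - ω) - cos (k - 2 * ω) + cos ω - cos k := by
  have hk : 2 * cos k * cos (ω - k) = cos (2 * k - ω) + cos ω := by
    rw [two_mul_cos_mul_cos]; ring_nf
  have hω : 2 * cos ω * cos (ω - k) = cos k + cos (k - 2 * ω) := by
    rw [two_mul_cos_mul_cos, ← cos_neg (ω + (ω - k))]; ring_nf
  linear_combination hk - hω

/-- **Dispersion function factorization** for the coupled-cavity traveling wave tube
(CCTWT) under the exact synchronism assumption χ = 1, ω₀ = 1. -/
theorem cctwt_dispersion_factorization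
    (C₀ K₀ f ω k : ℝ) (hω : ω ≠ 0) (hω1 : ω ^ 2 ≠ 1) :
    let binf : ℝ := K₀ * Real.sin f - Real.cos f
    let D : ℝ := C₀ * Real.sin ω * (binf + Real.cos (ω - k))
      + (1 / ω) * (2 * (Real.cos k - Real.cos ω) * binf + Real.cos (2 * k - ω)
          - Real.cos (k - 2 * ω) + Real.cos ω - Real.cos k)
      + (1 / ω ^ 2) * (C₀ * Real.sin ω * (Real.cos f - Real.cos (k - ω)))
    let DC : ℝ := C₀ * Real.sin ω + 2 * (Real.cos k - Real.cos ω) / ω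
      - C₀ * Real.sin ω / ω ^ 2
    let DK : ℝ := Real.cos (ω - k) + binf + K₀ / (ω ^ 2 - 1)
    D - DC * DK = (K₀ / ω) * (2 * (Real.cos ω - Real.cos k) / (ω ^ 2 - 1)
      - C₀ * Real.sin ω * (1 - Real.sin f) / ω) := by
  intro binf D DC DK
  have hω1' : ω ^ 2 - 1 ≠ 0 := sub_ne_zero.mpr hω1
  simp only [binf, D, DC, DK]
  rw [← cos_neg (k - ω), neg_sub]
  field_simp
  linear_combination (norm := ring_nf) (ω * (1 - ω ^ 2)) * two_mul_cos_sub_cos_mul_cos_sub ω k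
end

section
/- Let C₀, K₀, f, ω be real numbers with ω ≠ 0 and ω² ≠ 1, and let s be a complex number. Set b∞ = K₀·sin f − cos f and b_f = K₀·(ω²/(ω²−1))·sin f − cos f. Define the CCTWT characteristic polynomial P(s) = s⁴ + p₃s³ + p₂s² + p₁s + e^{2iω}, where p₃ = 2e^{iω}·b∞ + C₀·((ω²−1)/ω)·sin ω − 2cos ω, p₂ = e^{iω}·[ 2b∞·(C₀·ω·sin ω − 2cos ω) + 2cos f·C₀·sin ω/ω + 2cos ω ], and p₁ = e^{2iω}·[ C₀·((ω²−1)/ω)·sin ω − 2cos ω ] + 2e^{iω}·b∞. Define the CCS characteristic polynomial P_C(s) = s² + [C₀·(ω − 1/ω)·sin ω − 2cos ω]·s + 1 and the MCK characteristic polynomial P_K(s) = s² + 2e^{iω}·b_f·s + e^{2iω}. Then P(s) − P_C(s)·P_K(s) = −2K₀·sin f·e^{iω}·s·(s² − 2cos ω·s + 1)/(ω²−1). -/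
/-!
Writing `e = exp (I ω)`, `P_C` has the same middle coefficient as the one in `p₃` and `p₁`, so
in `P - P_C P_K` the coefficients of `s³` and `s` are both `2e (b∞ - b_f) = -2e K₀ sin f / (ω² - 1)`.
In the coefficient of `s²` everything cancels once one uses that `e` is a root of
`s² - 2 cos ω s + 1`, i.e. `e² + 1 = 2 cos ω e`, and what is left is `4e K₀ sin f cos ω / (ω² - 1)`.
-/

open Complex in
theorem Complex.exp_I_mul_sq_add_one (x : ℂ) :
    exp (I * x) ^ 2 + 1 = 2 * cos x * exp (I * x) := by
  have hinv : exp (I * x) * exp (-x * I) = 1 := by rw [← exp_add]; ring_nf; exact exp_zero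
  rw [two_cos, mul_comm x I]
  linear_combination -hinv

theorem sq_sub_one_div_self {K : Type*} [DivisionRing K] (x : K) :
    (x ^ 2 - 1) / x = x - 1 / x := by
  rw [sub_div, sq, mul_self_div_self]

theorem cctwt_char_poly_factorization_general
    (C₀ K₀ f ω : ℝ) (hω1 : ω ^ 2 ≠ 1) (s : ℂ) :
    let e : ℂ := Complex.exp (Complex.I * ω)
    let binf : ℂ := ((K₀ * Real.sin f - Real.cos f : ℝ) : ℂ)
    let bf : ℂ := ((K₀ * (ω ^ 2 / (ω ^ 2 - 1)) * Real.sin f - Real.cos f : ℝ) : ℂ)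
    let p₃ : ℂ := 2 * e * binf
      + ((C₀ * ((ω ^ 2 - 1) / ω) * Real.sin ω - 2 * Real.cos ω : ℝ) : ℂ)
    let p₂ : ℂ := e * ((2 * (K₀ * Real.sin f - Real.cos f)
        * (C₀ * ω * Real.sin ω - 2 * Real.cos ω)
        + 2 * Real.cos f * C₀ * Real.sin ω / ω + 2 * Real.cos ω : ℝ) : ℂ)
    let p₁ : ℂ := e ^ 2 * ((C₀ * ((ω ^ 2 - 1) / ω) * Real.sin ω - 2 * Real.cos ω : ℝ) : ℂ)
      + 2 * e * binf
    let P : ℂ := s ^ 4 + p₃ * s ^ 3 + p₂ * s ^ 2 + p₁ * s + e ^ 2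
    let PC : ℂ := s ^ 2 + ((C₀ * (ω - 1 / ω) * Real.sin ω - 2 * Real.cos ω : ℝ) : ℂ) * s + 1
    let PK : ℂ := s ^ 2 + 2 * e * bf * s + e ^ 2
    P - PC * PK
      = -2 * (K₀ : ℂ) * (Real.sin f : ℂ) * e * s
          * (s ^ 2 - 2 * (Real.cos ω : ℂ) * s + 1) / ((ω : ℂ) ^ 2 - 1) := by
  intro e binf bf p₃ p₂ p₁ P PC PK
  have hden : (ω : ℂ) ^ 2 - 1 ≠ 0 := by exact_mod_cast sub_ne_zero.mpr hω1
  have he : e ^ 2 + 1 = 2 * Complex.cos ω * e := Complex.exp_I_mul_sq_add_one ω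
  have hω_inv : (ω : ℂ) * ω * (ω : ℂ)⁻¹ = ω := mul_self_mul_inv _
  simp only [P, PC, PK, p₁, p₂, p₃, binf, bf, ← sq_sub_one_div_self]
  push_cast
  simp only [div_eq_mul_inv]
  -- `ω` may vanish, so `ω⁻¹` stays an atom subject only to `ω * ω * ω⁻¹ = ω`.
  generalize (ω : ℂ)⁻¹ = u at hω_inv ⊢
  field_simp
  linear_combination (1 - (ω : ℂ) ^ 2) * s ^ 2
    * (he + 2 * C₀ * Complex.sin ω * (K₀ * Complex.sin f - Complex.cos f) * e * hω_inv)

/-- **Characteristic polynomial factorization** for the coupled-cavity traveling wave tube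
(CCTWT) under the exact synchronism assumption χ = 1, ω₀ = 1. -/
theorem cctwt_char_poly_factorization
    (C₀ K₀ f ω : ℝ) (hω : ω ≠ 0) (hω1 : ω ^ 2 ≠ 1) (s : ℂ) :
    let e : ℂ := Complex.exp (Complex.I * ω)
    let binf : ℂ := ((K₀ * Real.sin f - Real.cos f : ℝ) : ℂ)
    let bf : ℂ := ((K₀ * (ω ^ 2 / (ω ^ 2 - 1)) * Real.sin f - Real.cos f : ℝ) : ℂ)
    let p₃ : ℂ := 2 * e * binf
      + ((C₀ * ((ω ^ 2 - 1) / ω) * Real.sin ω - 2 * Real.cos ω : ℝ) : ℂ)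
    let p₂ : ℂ := e * ((2 * (K₀ * Real.sin f - Real.cos f)
        * (C₀ * ω * Real.sin ω - 2 * Real.cos ω)
        + 2 * Real.cos f * C₀ * Real.sin ω / ω + 2 * Real.cos ω : ℝ) : ℂ)
    let p₁ : ℂ := e ^ 2 * ((C₀ * ((ω ^ 2 - 1) / ω) * Real.sin ω - 2 * Real.cos ω : ℝ) : ℂ)
      + 2 * e * binf
    let P : ℂ := s ^ 4 + p₃ * s ^ 3 + p₂ * s ^ 2 + p₁ * s + e ^ 2
    let PC : ℂ := s ^ 2 + ((C₀ * (ω - 1 / ω) * Real.sin ω - 2 * Real.cos ω : ℝ) : ℂ) * s + 1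
    let PK : ℂ := s ^ 2 + 2 * e * bf * s + e ^ 2
    P - PC * PK
      = -2 * (K₀ : ℂ) * (Real.sin f : ℂ) * e * s
          * (s ^ 2 - 2 * (Real.cos ω : ℂ) * s + 1) / ((ω : ℂ) ^ 2 - 1) :=
  cctwt_char_poly_factorization_general C₀ K₀ f ω hω1 s
end

section
/- Let b and ω be real numbers with b ≠ 0, let m be an integer, and let ε ∈ {1, −1}. Define the complex number κ as follows: if b² > 1, set κ = −((1 + sign b)/2)·π + ω + 2πm + ε·i·ln(|b| + √(b²−1)); if b² ≤ 1, set κ = −((1 + sign b)/2)·π + ω + 2πm + ε·arccos(|b|). Then the complex number S = exp(i·(κ − ω)) satisfies S² + 2b·S + 1 = 0. -/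
/-!
With `φ` the wavenumber shift (`ε · arccos |b|`, or `ε · i · arcosh |b|` when `b² > 1`), the
formulas give `S = -sign b · e^{iφ}`, and in both regimes `cos φ = |b|`. Any `z = e^{iφ}`
satisfies `z + z⁻¹ = 2 cos φ`, i.e. `z² - 2 cos φ · z + 1 = 0`; multiplying the root by
`-sign b` turns this into `S² + 2 b S + 1 = 0`.
-/

open Complex

theorem Complex.exp_mul_I_sq_sub_two_cos_mul_add_one (φ : ℂ) :
    exp (φ * I) ^ 2 - 2 * cos φ * exp (φ * I) + 1 = 0 := by
  have hinv : exp (-φ * I) * exp (φ * I) = 1 := by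
    rw [← exp_add, neg_mul, neg_add_cancel, exp_zero]
  linear_combination (-exp (φ * I)) * two_cos (x := φ) - hinv

theorem Complex.cos_mul_of_eq_one_or_eq_neg_one {ε : ℝ} (hε : ε = 1 ∨ ε = -1) (z : ℂ) :
    cos (ε * z) = cos z := by
  rcases hε with rfl | rfl <;> simp

theorem exp_sign_phase_mul_I {b : ℝ} (hb : b ≠ 0) (m : ℤ) :
    exp ((-((1 + Real.sign b) / 2) * Real.pi + 2 * Real.pi * m : ℝ) * I) = -Real.sign b := by
  rcases hb.lt_or_gt with hneg | hpos
  · rw [Real.sign_of_neg hneg]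
    push_cast
    rw [show (-((1 + -1) / 2) * Real.pi + 2 * Real.pi * m) * I = m * (2 * Real.pi * I) by ring,
      exp_int_mul_two_pi_mul_I]
    norm_num
  · rw [Real.sign_of_pos hpos]
    push_cast
    rw [show (-((1 + 1) / 2) * Real.pi + 2 * Real.pi * m) * I
        = -(Real.pi * I) + m * (2 * Real.pi * I) by ring,
      exp_add, exp_neg_pi_mul_I, exp_int_mul_two_pi_mul_I]
    norm_num

theorem neg_sign_mul_root_of_root {b : ℝ} (hb : b ≠ 0) {z : ℂ}
    (hz : z ^ 2 - 2 * |b| * z + 1 = 0) :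
    (-Real.sign b * z) ^ 2 + 2 * b * (-Real.sign b * z) + 1 = 0 := by
  rcases hb.lt_or_gt with hneg | hpos
  · rw [Real.sign_of_neg hneg, abs_of_neg hneg] at *
    push_cast at *
    linear_combination hz
  · rw [Real.sign_of_pos hpos, abs_of_pos hpos] at *
    push_cast at *
    linear_combination hz

/-- **MCK dispersion relations**: the wavenumbers given by the explicit formulas produce,
via `S = exp (i (κ - ω))`, the roots of `S² + 2 b S + 1 = 0`. -/
theorem mck_dispersion_wavenumbers
    (b ω : ℝ) (hb : b ≠ 0) (m : ℤ) (ε : ℝ) (hε : ε = 1 ∨ ε = -1) :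
    let κ : ℂ :=
      if 1 < b ^ 2 then
        ((-((1 + Real.sign b) / 2) * Real.pi + ω + 2 * Real.pi * (m : ℝ) : ℝ) : ℂ)
          + (ε : ℂ) * Complex.I * ((Real.log (|b| + Real.sqrt (b ^ 2 - 1)) : ℝ) : ℂ)
      else
        ((-((1 + Real.sign b) / 2) * Real.pi + ω + 2 * Real.pi * (m : ℝ)
            + ε * Real.arccos |b| : ℝ) : ℂ)
    let S : ℂ := Complex.exp (Complex.I * (κ - (ω : ℂ)))
    S ^ 2 + 2 * (b : ℂ) * S + 1 = 0 := by
  intro κ S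
  have root_of_cos_eq : ∀ φ : ℂ,
      κ - ω = (-((1 + Real.sign b) / 2) * Real.pi + 2 * Real.pi * m : ℝ) + φ →
      cos φ = |b| → S ^ 2 + 2 * b * S + 1 = 0 := by
    intro φ hκ hφ
    have hS : S = -Real.sign b * exp (φ * I) := by
      rw [show S = exp ((κ - ω) * I) from congrArg exp (mul_comm _ _), hκ, add_mul, exp_add,
        exp_sign_phase_mul_I hb]
    rw [hS]
    exact neg_sign_mul_root_of_root hb (hφ ▸ exp_mul_I_sq_sub_two_cos_mul_add_one φ)
  have habs : |b| ^ 2 = b ^ 2 := sq_abs b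
  by_cases hb2 : 1 < b ^ 2
  · refine root_of_cos_eq (ε * (Real.arcosh |b| * I)) ?_ ?_
    · simp only [κ, if_pos hb2, Real.arcosh, habs]
      push_cast
      ring
    · have h1 : 1 ≤ |b| := by nlinarith [abs_nonneg b]
      rw [cos_mul_of_eq_one_or_eq_neg_one hε, cos_mul_I, ← ofReal_cosh, Real.cosh_arcosh h1]
  · refine root_of_cos_eq (ε * Real.arccos |b|) ?_ ?_
    · simp only [κ, if_neg hb2]
      push_cast
      ring
    · have h1 : |b| ≤ 1 := by nlinarith [abs_nonneg b]
      rw [cos_mul_of_eq_one_or_eq_neg_one hε, ← ofReal_cos,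
        Real.cos_arccos (by linarith [abs_nonneg b]) h1]
end

section
/- Let ω, f, b_f be real numbers with f ≠ 0 and sin f ≠ 0, and write sinc f = sin f / f. Let 𝒯_K be the 2×2 complex matrix 𝒯_K = e^{iω}·[[cos f − i·ω·sinc f, sinc f], [ω²·sinc f + 2i·ω·(cos f + b_f) − (2b_f·cos f + cos²f + 1)/sinc f, i·ω·sinc f − cos f − 2b_f]]. Then for every complex number s, det(𝒯_K − s·𝟙) = s² + 2b_f·e^{iω}·s + e^{2iω}. In particular det 𝒯_K = e^{2iω} and trace 𝒯_K = −2b_f·e^{iω}. -/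
/-!
Both claims reduce to trace and determinant, since a 2×2 matrix `M` satisfies
`det (M - s 𝟙) = s² - tr M · s + det M`. Factoring out `e^{iω}` scales the trace by `e^{iω}` and
the determinant by `e^{2iω}`, and the remaining matrix has trace `-2 b_f` and determinant `1`:
its lower-left entry was chosen (dividing by `sinc f ≠ 0`) exactly so that all `ω`- and
`b_f`-dependence cancels in the determinant.
-/

open Matrix

theorem Matrix.det_sub_smul_one_fin_two {R : Type*} [CommRing R]
    (M : Matrix (Fin 2) (Fin 2) R) (s : R) :
    (M - s • (1 : Matrix (Fin 2) (Fin 2) R)).det = s ^ 2 - M.trace * s + M.det := by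
  simp only [det_fin_two, trace_fin_two, sub_apply, smul_apply, one_apply_eq,
    one_apply_ne zero_ne_one, one_apply_ne one_ne_zero, smul_eq_mul, mul_one, mul_zero, sub_zero]
  ring

/-- The MCK monodromy matrix with the factor `e^{iω}` removed, with `c = cos f` and
`σ = sinc f`. -/
noncomputable def mckReducedMonodromy (c ω b σ : ℂ) : Matrix (Fin 2) (Fin 2) ℂ :=
  !![c - Complex.I * ω * σ, σ;
     ω ^ 2 * σ + 2 * Complex.I * ω * (c + b) - (2 * b * c + c ^ 2 + 1) / σ,
     Complex.I * ω * σ - c - 2 * b]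

theorem mckReducedMonodromy_det (c ω b : ℂ) {σ : ℂ} (hσ : σ ≠ 0) :
    (mckReducedMonodromy c ω b σ).det = 1 := by
  rw [mckReducedMonodromy, det_fin_two_of]
  field_simp
  linear_combination (-(ω ^ 2 * σ ^ 2)) * Complex.I_sq

theorem mckReducedMonodromy_trace (c ω b σ : ℂ) :
    (mckReducedMonodromy c ω b σ).trace = -2 * b := by
  rw [mckReducedMonodromy, trace_fin_two_of]
  ring

/-- The characteristic polynomial of the MCK monodromy matrix:
`det (𝒯_K - s 𝟙) = s² + 2 b_f e^{iω} s + e^{2iω}`. -/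
theorem mck_monodromy_char_poly
    (ω f b_f : ℝ) (hf : f ≠ 0) (hsf : Real.sin f ≠ 0) :
    let sc : ℂ := ((Real.sin f / f : ℝ) : ℂ)
    let e : ℂ := Complex.exp (Complex.I * ω)
    let T : Matrix (Fin 2) (Fin 2) ℂ :=
      e • !![(Real.cos f : ℂ) - Complex.I * (ω : ℂ) * sc, sc;
             (ω : ℂ) ^ 2 * sc + 2 * Complex.I * (ω : ℂ) * ((Real.cos f : ℂ) + (b_f : ℂ))
               - (2 * (b_f : ℂ) * (Real.cos f : ℂ) + (Real.cos f : ℂ) ^ 2 + 1) / sc,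
             Complex.I * (ω : ℂ) * sc - (Real.cos f : ℂ) - 2 * (b_f : ℂ)]
    (∀ s : ℂ, (T - s • (1 : Matrix (Fin 2) (Fin 2) ℂ)).det
        = s ^ 2 + 2 * (b_f : ℂ) * e * s + e ^ 2)
      ∧ T.det = e ^ 2 ∧ T.trace = -2 * (b_f : ℂ) * e := by
  intro sc e T
  have hsc : sc ≠ 0 := Complex.ofReal_ne_zero.mpr (div_ne_zero hsf hf)
  have hT : T = e • mckReducedMonodromy (Real.cos f) ω b_f sc := rfl
  have hdet : T.det = e ^ 2 := by
    rw [hT, det_smul, mckReducedMonodromy_det _ _ _ hsc, Fintype.card_fin, mul_one]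
  have htrace : T.trace = -2 * (b_f : ℂ) * e := by
    rw [hT, trace_smul, mckReducedMonodromy_trace, smul_eq_mul]
    ring
  refine ⟨fun s => ?_, hdet, htrace⟩
  rw [det_sub_smul_one_fin_two, hdet, htrace]
  ring
end

section
/- Let ω, f, z be real numbers with f ≠ 0, and let 𝒞_B be the 2×2 complex matrix [[0, 1], [ω² − f², 2iω]]. Then the matrix exponential satisfies exp(z·𝒞_B) = (e^{iωz}/f)·[[f·cos(fz) − i·ω·sin(fz), sin(fz)], [(ω² − f²)·sin(fz), f·cos(fz) + i·ω·sin(fz)]]. -/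
/-!
Split `𝒞_B = iω + N` with `N` traceless. By Cayley–Hamilton `N² = -det N = -f²`, so the even and
odd parts of the exponential series of `zN` are the series of `cos (fz)` and `sin (fz) / f · N`,
while the commuting scalar part `iωz` contributes the factor `e^{iωz}`.
-/

open Matrix

theorem NormedSpace.exp_smul_of_sq_eq_neg_sq {A : Type*} [NormedRing A] [NormedAlgebra ℂ A]
    [CompleteSpace A] {x : A} {c : ℂ} (hc : c ≠ 0) (hx : x ^ 2 = -c ^ 2 • 1) (t : ℂ) :
    NormedSpace.exp (t • x) = Complex.cos (c * t) • 1 + (Complex.sin (c * t) / c) • x := by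
  have hI (n : ℕ) : (c * t * Complex.I) ^ (2 * n) = t ^ (2 * n) * (-c ^ 2) ^ n := by
    rw [mul_pow, pow_mul Complex.I, Complex.I_sq, neg_pow (c ^ 2), mul_pow, pow_mul c]
    ring
  refine (NormedSpace.exp_series_hasSum_exp' (𝕂 := ℂ) (t • x)).unique (HasSum.even_add_odd ?_ ?_)
  · convert (Complex.hasSum_cos' (c * t)).smul_const (1 : A) using 2 with n
    rw [hI, smul_pow, pow_mul x, hx, smul_pow, one_pow, smul_smul, smul_smul]
    ring_nf
  · convert ((Complex.hasSum_sin' (c * t)).div_const c).smul_const x using 2 with n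
    rw [pow_succ (c * t * Complex.I), hI, smul_pow, pow_succ x, pow_mul x, hx, smul_pow, one_pow,
      smul_mul_assoc, one_mul, smul_smul, smul_smul]
    congr 1
    field_simp
    ring

theorem Matrix.exp_smul_of_discr_eq {m : Matrix (Fin 2) (Fin 2) ℂ} {c : ℂ} (hc : c ≠ 0)
    (hm : m.discr = -4 * c ^ 2) (t : ℂ) :
    NormedSpace.exp (t • m) = Complex.exp (t * (m.trace / 2)) •
      (Complex.cos (c * t) • 1 + (Complex.sin (c * t) / c) • (m - scalar (Fin 2) (m.trace / 2))) := by
  set a := m.trace / 2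
  have hsq : (m - scalar (Fin 2) a) ^ 2 = -c ^ 2 • 1 := by
    rw [sub_scalar_sq_eq_discr, hm, scalar_apply, ← smul_one_eq_diagonal]
    congr 1
    ring
  have hsplit : t • m = algebraMap ℂ _ (t * a) + t • (m - scalar (Fin 2) a) := by
    rw [Algebra.algebraMap_eq_smul_one, scalar_apply, ← smul_one_eq_diagonal, ← smul_smul,
      smul_sub, add_sub_cancel]
  -- Any norm will do: `NormedSpace.exp` only depends on the topology.
  let := Matrix.linftyOpNormedRing (n := Fin 2) (α := ℂ)
  let := Matrix.linftyOpNormedAlgebra (n := Fin 2) (R := ℂ) (α := ℂ)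
  have hscalar : NormedSpace.exp (algebraMap ℂ (Matrix (Fin 2) (Fin 2) ℂ) (t * a)) =
      Complex.exp (t * a) • 1 := by
    rw [Complex.exp_eq_exp_ℂ, ← Algebra.algebraMap_eq_smul_one]
    exact (NormedSpace.algebraMap_exp_comm _).symm
  have htraceless : NormedSpace.exp (t • (m - scalar (Fin 2) a)) =
      Complex.cos (c * t) • 1 + (Complex.sin (c * t) / c) • (m - scalar (Fin 2) a) :=
    NormedSpace.exp_smul_of_sq_eq_neg_sq hc hsq t
  rw [hsplit, Matrix.exp_add_of_commute _ _ (Algebra.commute_algebraMap_left _ _), hscalar,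
    htraceless, smul_mul_assoc, one_mul]

/-- The matrix exponential of the e-beam companion matrix is the fundamental matrix
solution of the first-order system associated with the e-beam equation. -/
theorem ebeam_companion_matrix_exp
    (ω f z : ℝ) (hf : f ≠ 0) :
    let CB : Matrix (Fin 2) (Fin 2) ℂ :=
      !![0, 1; (ω : ℂ) ^ 2 - (f : ℂ) ^ 2, 2 * Complex.I * (ω : ℂ)]
    NormedSpace.exp ((z : ℂ) • CB)
      = (Complex.exp (Complex.I * ω * z) / (f : ℂ)) •
        !![(f : ℂ) * (Real.cos (f * z) : ℂ)
             - Complex.I * (ω : ℂ) * (Real.sin (f * z) : ℂ),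
           (Real.sin (f * z) : ℂ);
           ((ω : ℂ) ^ 2 - (f : ℂ) ^ 2) * (Real.sin (f * z) : ℂ),
           (f : ℂ) * (Real.cos (f * z) : ℂ)
             + Complex.I * (ω : ℂ) * (Real.sin (f * z) : ℂ)] := by
  intro CB
  have hf' : (f : ℂ) ≠ 0 := by exact_mod_cast hf
  have htrace : CB.trace / 2 = Complex.I * ω := by
    simp only [CB, trace_fin_two_of]
    ring
  have hdiscr : CB.discr = -4 * (f : ℂ) ^ 2 := by
    simp only [CB, discr_fin_two, trace_fin_two_of, det_fin_two_of]
    linear_combination (4 * (ω : ℂ) ^ 2) * Complex.I_sq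
  rw [Matrix.exp_smul_of_discr_eq hf' hdiscr, htrace]
  push_cast
  ext i j
  fin_cases i <;> fin_cases j <;> simp [CB] <;> field_simp <;> ring
end

section
/- Let m, ν ≥ 1 and let A₀, A₁, …, A_ν be m×m complex matrices; set A(s) = Σ_{j=0}^{ν} A_j·s^j. Let B be the (mν)×(mν) block-diagonal matrix diag(𝟙, …, 𝟙, A_ν) and 𝖠 the (mν)×(mν) block companion matrix with identity superdiagonal blocks and last block row (−A₀, −A₁, …, −A_{ν−1}). Then for every s₀ ∈ ℂ, the dimension of the kernel of the linear map given by the matrix s₀·B − 𝖠 on ℂ^{mν} equals the dimension of the kernel of the linear map given by the matrix A(s₀) on ℂ^m; that is, the geometric multiplicities of the eigenvalue s₀ for the pencil sB − 𝖠 and for the matrix polynomial A(s) coincide. -/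
/-!
The first `ν - 1` block rows of `s₀ B - 𝖠` say `x_{i+1} = s₀ x_i`, so a kernel vector is
`(x₀, s₀ x₀, …, s₀^(ν-1) x₀)`, and on such a vector the last block row is `A(s₀) x₀`.
Hence the injective lift `y ↦ (s₀^i y)ᵢ` maps `ker A(s₀)` onto the kernel of the pencil.
-/

open Matrix

namespace MatrixPolynomial

variable {R : Type*} [CommRing R] {m ν : ℕ}

def eval (A : Fin (ν + 1) → Matrix (Fin m) (Fin m) R) (s : R) : Matrix (Fin m) (Fin m) R :=
  ∑ j : Fin (ν + 1), s ^ (j : ℕ) • A j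

/-- In the paper's notation `leadBlockDiag A = diag(𝟙, …, 𝟙, A_ν)` and `blockCompanion A = 𝖠`;
an index `(i, k)` is entry `k` of block `i`. -/
def leadBlockDiag (A : Fin (ν + 1) → Matrix (Fin m) (Fin m) R) :
    Matrix (Fin ν × Fin m) (Fin ν × Fin m) R := Matrix.of fun p q =>
  if p.1 = q.1 then
    (if (p.1 : ℕ) = ν - 1 then A (Fin.last ν) p.2 q.2
     else (1 : Matrix (Fin m) (Fin m) R) p.2 q.2)
  else 0

def blockCompanion (A : Fin (ν + 1) → Matrix (Fin m) (Fin m) R) :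
    Matrix (Fin ν × Fin m) (Fin ν × Fin m) R := Matrix.of fun p q =>
  if (p.1 : ℕ) = ν - 1 then -(A (Fin.castSucc q.1) p.2 q.2)
  else if (q.1 : ℕ) = (p.1 : ℕ) + 1 then (1 : Matrix (Fin m) (Fin m) R) p.2 q.2
  else 0

def pencil (A : Fin (ν + 1) → Matrix (Fin m) (Fin m) R) (s : R) :
    Matrix (Fin ν × Fin m) (Fin ν × Fin m) R :=
  s • leadBlockDiag A - blockCompanion A

def vandermondeLift (s : R) : (Fin m → R) →ₗ[R] (Fin ν × Fin m → R) where
  toFun y p := s ^ (p.1 : ℕ) * y p.2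
  map_add' _ _ := by ext; simp [mul_add]
  map_smul' _ _ := by ext; simp [mul_left_comm]

@[simp]
lemma vandermondeLift_apply (s : R) (y : Fin m → R) (p : Fin ν × Fin m) :
    vandermondeLift s y p = s ^ (p.1 : ℕ) * y p.2 := rfl

lemma vandermondeLift_injective [NeZero ν] (s : R) :
    Function.Injective (vandermondeLift (m := m) (ν := ν) s) := by
  intro y z h
  funext k
  simpa using congrFun h (0, k)

variable (A : Fin (ν + 1) → Matrix (Fin m) (Fin m) R) (s : R)

lemma eval_mulVec (y : Fin m → R) :
    eval A s *ᵥ y = ∑ j : Fin (ν + 1), s ^ (j : ℕ) • (A j *ᵥ y) := by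
  simp only [eval, sum_mulVec, smul_mulVec]

lemma pencil_mulVec_apply_of_lt (x : Fin ν × Fin m → R) (i : ℕ) (hi : i + 1 < ν) (k : Fin m) :
    (pencil A s *ᵥ x) (⟨i, by omega⟩, k) = s * x (⟨i, by omega⟩, k) - x (⟨i + 1, hi⟩, k) := by
  have hne : i ≠ ν - 1 := by omega
  have hc : ∀ j : Fin ν, ((j : ℕ) = i + 1) ↔ (j = ⟨i + 1, hi⟩) := fun j => by rw [Fin.ext_iff]
  simp [pencil, mulVec, dotProduct, Fintype.sum_prod_type, leadBlockDiag, blockCompanion, hne, hc,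
    one_apply, sub_mul, Finset.sum_sub_distrib, ite_mul]

lemma pencil_mulVec_apply_of_eq (x : Fin ν × Fin m → R) (i : Fin ν) (hi : (i : ℕ) = ν - 1)
    (k : Fin m) :
    (pencil A s *ᵥ x) (i, k) = s * (A (Fin.last ν) *ᵥ Function.curry x i) k
      + ∑ j : Fin ν, (A j.castSucc *ᵥ Function.curry x j) k := by
  simp only [pencil, mulVec, dotProduct, Fintype.sum_prod_type, leadBlockDiag, blockCompanion, hi,
    Matrix.sub_apply, Matrix.smul_apply, of_apply, if_true, smul_eq_mul, sub_neg_eq_add, add_mul,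
    Finset.sum_add_distrib, Function.curry_apply]
  simp [Finset.mul_sum, mul_assoc]

lemma pencil_mulVec_vandermondeLift (y : Fin m → R) :
    pencil A s *ᵥ vandermondeLift s y
      = fun p => if (p.1 : ℕ) = ν - 1 then (eval A s *ᵥ y) p.2 else 0 := by
  ext ⟨i, k⟩
  dsimp only
  split_ifs with hi
  · have hcurry : ∀ j : Fin ν, Function.curry (vandermondeLift s y) j = s ^ (j : ℕ) • y :=
      fun _ => rfl
    have hν : ν = ν - 1 + 1 := by omega
    rw [pencil_mulVec_apply_of_eq A s _ i hi k, eval_mulVec, Fin.sum_univ_castSucc]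
    simp only [hcurry, mulVec_smul, Pi.add_apply, Finset.sum_apply, Pi.smul_apply, smul_eq_mul,
      Fin.val_last, Fin.val_castSucc]
    rw [add_comm, ← mul_assoc, ← pow_succ', hi, ← hν]
  · have hlt : (i : ℕ) + 1 < ν := by omega
    simpa [pow_succ, mul_comm, mul_left_comm] using
      pencil_mulVec_apply_of_lt A s (vandermondeLift s y) i hlt k

lemma eq_vandermondeLift_of_pencil_mulVec_eq_zero [NeZero ν] {x : Fin ν × Fin m → R}
    (hx : pencil A s *ᵥ x = 0) : x = vandermondeLift s (Function.curry x 0) := by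
  suffices h : ∀ i (hi : i < ν) k, x (⟨i, hi⟩, k) = s ^ i * x (0, k) by
    ext ⟨i, k⟩
    exact h i i.2 k
  intro i
  induction i with
  | zero => intro _ k; simp
  | succ i ih =>
    intro hi k
    have hrow := pencil_mulVec_apply_of_lt A s x i hi k
    rw [hx, Pi.zero_apply, eq_comm, sub_eq_zero, ih] at hrow
    rw [← hrow, pow_succ']
    ring

lemma ker_pencil_eq_map_vandermondeLift [NeZero ν] :
    LinearMap.ker (pencil A s).mulVecLin
      = (LinearMap.ker (eval A s).mulVecLin).map (vandermondeLift s) := by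
  ext x
  simp only [LinearMap.mem_ker, mulVecLin_apply, Submodule.mem_map]
  constructor
  · intro hx
    have hlift := eq_vandermondeLift_of_pencil_mulVec_eq_zero A s hx
    refine ⟨Function.curry x 0, ?_, hlift.symm⟩
    have hlast := pencil_mulVec_vandermondeLift A s (Function.curry x 0)
    rw [← hlift, hx] at hlast
    funext k
    simpa using (congrFun hlast (⟨ν - 1, Nat.sub_one_lt (NeZero.ne ν)⟩, k)).symm
  · rintro ⟨y, hy, rfl⟩
    rw [pencil_mulVec_vandermondeLift, hy]
    funext p
    simp

theorem finrank_ker_pencil_eq_finrank_ker_eval [NeZero ν] :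
    Module.finrank R (LinearMap.ker (pencil A s).mulVecLin)
      = Module.finrank R (LinearMap.ker (eval A s).mulVecLin) := by
  rw [ker_pencil_eq_map_vandermondeLift]
  exact (Submodule.equivMapOfInjective _ (vandermondeLift_injective s) _).finrank_eq.symm

end MatrixPolynomial

open MatrixPolynomial in
theorem companion_pencil_geometric_multiplicity_general (m ν : ℕ) (hν : 1 ≤ ν)
    (A : Fin (ν + 1) → Matrix (Fin m) (Fin m) ℂ) (s₀ : ℂ) :
    let Apoly : Matrix (Fin m) (Fin m) ℂ := ∑ j : Fin (ν + 1), s₀ ^ (j : ℕ) • A j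
    let B : Matrix (Fin ν × Fin m) (Fin ν × Fin m) ℂ := Matrix.of fun p q =>
      if p.1 = q.1 then
        (if (p.1 : ℕ) = ν - 1 then A (Fin.last ν) p.2 q.2
         else (1 : Matrix (Fin m) (Fin m) ℂ) p.2 q.2)
      else 0
    let CA : Matrix (Fin ν × Fin m) (Fin ν × Fin m) ℂ := Matrix.of fun p q =>
      if (p.1 : ℕ) = ν - 1 then -(A (Fin.castSucc q.1) p.2 q.2)
      else if (q.1 : ℕ) = (p.1 : ℕ) + 1 then (1 : Matrix (Fin m) (Fin m) ℂ) p.2 q.2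
      else 0
    Module.finrank ℂ (LinearMap.ker (s₀ • B - CA).mulVecLin)
      = Module.finrank ℂ (LinearMap.ker Apoly.mulVecLin) := by
  have : NeZero ν := ⟨by omega⟩
  exact finrank_ker_pencil_eq_finrank_ker_eval A s₀

/-- The geometric multiplicities of an eigenvalue `s₀` for the companion pencil `s B - 𝖠`
and for the matrix polynomial `A(s)` coincide. -/
theorem companion_pencil_geometric_multiplicity (m ν : ℕ) (hm : 1 ≤ m) (hν : 1 ≤ ν)
    (A : Fin (ν + 1) → Matrix (Fin m) (Fin m) ℂ) (s₀ : ℂ) :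
    let Apoly : Matrix (Fin m) (Fin m) ℂ := ∑ j : Fin (ν + 1), s₀ ^ (j : ℕ) • A j
    let B : Matrix (Fin ν × Fin m) (Fin ν × Fin m) ℂ := Matrix.of fun p q =>
      if p.1 = q.1 then
        (if (p.1 : ℕ) = ν - 1 then A (Fin.last ν) p.2 q.2
         else (1 : Matrix (Fin m) (Fin m) ℂ) p.2 q.2)
      else 0
    let CA : Matrix (Fin ν × Fin m) (Fin ν × Fin m) ℂ := Matrix.of fun p q =>
      if (p.1 : ℕ) = ν - 1 then -(A (Fin.castSucc q.1) p.2 q.2)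
      else if (q.1 : ℕ) = (p.1 : ℕ) + 1 then (1 : Matrix (Fin m) (Fin m) ℂ) p.2 q.2
      else 0
    Module.finrank ℂ (LinearMap.ker (s₀ • B - CA).mulVecLin)
      = Module.finrank ℂ (LinearMap.ker Apoly.mulVecLin) :=
  companion_pencil_geometric_multiplicity_general m ν hν A s₀
end

section
/- Let n be a natural number, ς > 0 a real number, and A : ℝ → Matrix n n ℂ a continuous matrix-valued function with A(z + ς) = A(z) for all z ∈ ℝ. Suppose Φ : ℝ → Matrix n n ℂ satisfies Φ(0) = 𝟙 and, for every z ∈ ℝ, Φ is differentiable at z with derivative A(z)·Φ(z). Let Γ be an n×n complex matrix with exp(ς·Γ) = Φ(ς). Then the matrix-valued function P defined by P(z) = Φ(z)·exp(−z·Γ) satisfies P(z + ς) = P(z) for all z ∈ ℝ and P(0) = 𝟙; consequently Φ(z) = P(z)·exp(z·Γ) is the Floquet representation of the matrizant, with P a ς-periodic matrix function. -/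
open Matrix

attribute [local instance] Matrix.normedAddCommGroup Matrix.normedSpace

open Set NormedSpace

/-! Since `A` is `ς`-periodic, `t ↦ Φ (t + ς)` solves the same linear equation as `Φ`, and so does
`t ↦ Φ t * Φ ς`; both take the value `Φ ς` at `0`, so uniqueness for linear ODEs with continuous
coefficients gives `Φ (z + ς) = Φ z * Φ ς`. With `Φ ς = exp (ς Γ)` and the group law of
`s ↦ exp (s Γ)`, `P (z + ς) = Φ z Φ ς exp (-ς Γ) exp (-z Γ) = P z`. -/

theorem linear_ODE_solution_unique {E : Type*} [NormedAddCommGroup E] [NormedSpace ℝ E]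
    {L : ℝ → E →L[ℝ] E} (hL : Continuous L) {f g : ℝ → E} {t₀ : ℝ}
    (hf : ∀ t, HasDerivAt f (L t (f t)) t) (hg : ∀ t, HasDerivAt g (L t (g t)) t)
    (heq : f t₀ = g t₀) : f = g := by
  funext t
  obtain ⟨a, b, ht, ht₀⟩ : ∃ a b, t ∈ Ioo a b ∧ t₀ ∈ Ioo a b :=
    ⟨min t t₀ - 1, max t t₀ + 1, by constructor <;> constructor <;> grind⟩
  obtain ⟨C, hC⟩ := (isCompact_Icc (a := a) (b := b)).exists_bound_of_continuousOn hL.continuousOn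
  have hlip : ∀ s ∈ Ioo a b, LipschitzOnWith C.toNNReal (L s) univ := fun s hs =>
    ((L s).lipschitz.weaken
      (NNReal.le_toNNReal_of_coe_le (hC s (Ioo_subset_Icc_self hs)))).lipschitzOnWith
  exact ODE_solution_unique_of_mem_Ioo hlip ht₀ (fun s _ => ⟨hf s, trivial⟩)
    (fun s _ => ⟨hg s, trivial⟩) heq ht

section Matrix

variable {m 𝕜 : Type*} [Fintype m] [DecidableEq m] [RCLike 𝕜]

/- The entrywise sup norm makes `Matrix m m 𝕜` no normed ring, so `ContinuousLinearMap.mul` is not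
available; continuity comes from finite dimensionality instead. -/
theorem Matrix.exists_continuous_mulLeft_clm {A : ℝ → Matrix m m 𝕜} (hA : Continuous A) :
    ∃ L : ℝ → Matrix m m 𝕜 →L[ℝ] Matrix m m 𝕜, Continuous L ∧ ∀ t X, L t X = A t * X :=
  ⟨fun t => (LinearMap.toContinuousLinearMap.toLinearMap ∘ₗ LinearMap.mul ℝ _) (A t),
    (LinearMap.continuous_of_finiteDimensional _).comp hA, fun _ _ => rfl⟩

theorem Matrix.ode_solution_eq_mul_apply_zero {A Φ Ψ : ℝ → Matrix m m 𝕜} (hA : Continuous A)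
    (hΦ0 : Φ 0 = 1) (hΦ : ∀ t, HasDerivAt Φ (A t * Φ t) t)
    (hΨ : ∀ t, HasDerivAt Ψ (A t * Ψ t) t) (t : ℝ) : Ψ t = Φ t * Ψ 0 := by
  obtain ⟨L, hL, hLA⟩ := Matrix.exists_continuous_mulLeft_clm hA
  have hΦΨ : ∀ t, HasDerivAt (fun t => Φ t * Ψ 0) (L t (Φ t * Ψ 0)) t := fun t => by
    rw [hLA, ← mul_assoc]
    exact (LinearMap.mulRight ℝ (Ψ 0)).toContinuousLinearMap.hasFDerivAt.comp_hasDerivAt t (hΦ t)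
  have hΨL : ∀ t, HasDerivAt Ψ (L t (Ψ t)) t := fun t => by
    rw [hLA]
    exact hΨ t
  exact congrFun (linear_ODE_solution_unique hL (t₀ := 0) hΨL hΦΨ (by simp [hΦ0])) t

theorem Matrix.ode_solution_add_period {A Φ : ℝ → Matrix m m 𝕜} {ς : ℝ} (hA : Continuous A)
    (hper : Function.Periodic A ς) (hΦ0 : Φ 0 = 1) (hΦ : ∀ t, HasDerivAt Φ (A t * Φ t) t)
    (z : ℝ) : Φ (z + ς) = Φ z * Φ ς := by
  have hshift : ∀ t, HasDerivAt (fun t => Φ (t + ς)) (A t * Φ (t + ς)) t := fun t => by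
    rw [← hper t]
    exact (hΦ (t + ς)).comp_add_const t ς
  simpa using Matrix.ode_solution_eq_mul_apply_zero hA hΦ0 hΦ hshift z

theorem Matrix.exp_add_smul (Γ : Matrix m m 𝕜) (a b : 𝕜) :
    exp ((a + b) • Γ) = exp (a • Γ) * exp (b • Γ) := by
  rw [add_smul]
  exact Matrix.exp_add_of_commute _ _ (((Commute.refl Γ).smul_left a).smul_right b)

theorem Matrix.exp_smul_mul_exp_neg_smul (Γ : Matrix m m 𝕜) (a : 𝕜) :
    exp (a • Γ) * exp ((-a) • Γ) = 1 := by
  rw [← Matrix.exp_add_smul, add_neg_cancel, zero_smul, exp_zero]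

theorem Matrix.exp_neg_smul_mul_exp_smul (Γ : Matrix m m 𝕜) (a : 𝕜) :
    exp ((-a) • Γ) * exp (a • Γ) = 1 := by
  simpa using Matrix.exp_smul_mul_exp_neg_smul Γ (-a)

end Matrix

theorem floquet_representation_general (n : ℕ) (ς : ℝ)
    (A : ℝ → Matrix (Fin n) (Fin n) ℂ)
    (hAcont : Continuous A)
    (hAper : ∀ z : ℝ, A (z + ς) = A z)
    (Φ : ℝ → Matrix (Fin n) (Fin n) ℂ)
    (hΦ0 : Φ 0 = 1)
    (hΦ : ∀ z : ℝ, HasDerivAt Φ (A z * Φ z) z)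
    (Γ : Matrix (Fin n) (Fin n) ℂ)
    (hΓ : NormedSpace.exp ((ς : ℂ) • Γ) = Φ ς) :
    let P : ℝ → Matrix (Fin n) (Fin n) ℂ :=
      fun z => Φ z * NormedSpace.exp ((-(z : ℂ)) • Γ)
    (∀ z : ℝ, P (z + ς) = P z) ∧ P 0 = 1 ∧
      ∀ z : ℝ, Φ z = P z * NormedSpace.exp ((z : ℂ) • Γ) := by
  intro P
  refine ⟨fun z => ?_, by simp [P, hΦ0], fun z => ?_⟩
  · calc P (z + ς)
        = Φ z * (Φ ς * exp ((-(ς : ℂ)) • Γ)) * exp ((-(z : ℂ)) • Γ) := by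
          simp only [P, Matrix.ode_solution_add_period hAcont hAper hΦ0 hΦ, Complex.ofReal_add,
            neg_add_rev, Matrix.exp_add_smul, mul_assoc]
      _ = P z := by rw [← hΓ, Matrix.exp_smul_mul_exp_neg_smul, mul_one]
  · simp only [P, mul_assoc, Matrix.exp_neg_smul_mul_exp_smul, mul_one]

/-- **Floquet representation**: given a matrix logarithm `Γ` of the monodromy matrix
`Φ(ς)`, the function `P z = Φ z · exp (-z Γ)` is `ς`-periodic with `P 0 = 𝟙`, so that
`Φ z = P z · exp (z Γ)`. -/
theorem floquet_representation (n : ℕ) (ς : ℝ) (hς : 0 < ς)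
    (A : ℝ → Matrix (Fin n) (Fin n) ℂ)
    (hAcont : Continuous A)
    (hAper : ∀ z : ℝ, A (z + ς) = A z)
    (Φ : ℝ → Matrix (Fin n) (Fin n) ℂ)
    (hΦ0 : Φ 0 = 1)
    (hΦ : ∀ z : ℝ, HasDerivAt Φ (A z * Φ z) z)
    (Γ : Matrix (Fin n) (Fin n) ℂ)
    (hΓ : NormedSpace.exp ((ς : ℂ) • Γ) = Φ ς) :
    let P : ℝ → Matrix (Fin n) (Fin n) ℂ :=
      fun z => Φ z * NormedSpace.exp ((-(z : ℂ)) • Γ)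
    (∀ z : ℝ, P (z + ς) = P z) ∧ P 0 = 1 ∧
      ∀ z : ℝ, Φ z = P z * NormedSpace.exp ((z : ℂ) • Γ) :=
  floquet_representation_general n ς A hAcont hAper Φ hΦ0 hΦ Γ hΓ
end

section
/- Let a ∈ ℂ, b ∈ ℝ, and let S ∈ ℂ with |S| = 1. Define P(S) = S⁴ + a·S³ + b·S² + conj(a)·S + 1 and its derivative P′(S) = 4S³ + 3a·S² + 2b·S + conj(a). Then P(S) = 0 and P′(S) = 0 hold simultaneously if and only if Re(S² + a·S + b/2) = 0 and Im(2S² + a·S) = 0. -/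
/-!
On the unit circle `conj S = S⁻¹`, so the quartic `P` is `S²` times `Q + conj Q` with
`Q = S² + aS + b/2`, i.e. `P(S) = 2 S² Re Q`. Likewise `P'(S) = 2 conj S · P(S) + S (R - conj R)`
with `R = 2S² + aS`, so once `P(S) = 0` the derivative vanishes iff `Im R = 0`.
-/

open Complex ComplexConjugate

namespace Complex

theorem mul_conj_eq_one_of_norm_eq_one {S : ℂ} (hS : ‖S‖ = 1) : S * conj S = 1 := by
  rw [mul_conj', hS]
  norm_num

section SelfInversiveQuartic

variable {a : ℂ} {b : ℝ} {S : ℂ}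

theorem self_inversive_quartic_eq_sq_mul_re (hS : ‖S‖ = 1) :
    S ^ 4 + a * S ^ 3 + (b : ℂ) * S ^ 2 + conj a * S + 1
      = S ^ 2 * ((2 * (S ^ 2 + a * S + (b : ℂ) / 2).re : ℝ) : ℂ) := by
  rw [← add_conj]
  simp only [map_add, map_mul, map_pow, map_div₀, conj_ofReal, map_ofNat]
  linear_combination (-(conj a * S + 1 + S * conj S)) * mul_conj_eq_one_of_norm_eq_one hS

theorem self_inversive_quartic_deriv_eq (hS : ‖S‖ = 1) :
    4 * S ^ 3 + 3 * a * S ^ 2 + 2 * (b : ℂ) * S + conj a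
      = 2 * conj S * (S ^ 4 + a * S ^ 3 + (b : ℂ) * S ^ 2 + conj a * S + 1)
        + S * (((2 * (2 * S ^ 2 + a * S).im : ℝ) : ℂ) * I) := by
  rw [← sub_conj]
  simp only [map_add, map_mul, map_pow, map_ofNat]
  linear_combination (-(2 * S ^ 3 + 2 * a * S ^ 2 + 2 * (b : ℂ) * S + conj a - 2 * conj S))
    * mul_conj_eq_one_of_norm_eq_one hS

theorem self_inversive_quartic_eq_zero_iff (hS : ‖S‖ = 1) :
    S ^ 4 + a * S ^ 3 + (b : ℂ) * S ^ 2 + conj a * S + 1 = 0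
      ↔ (S ^ 2 + a * S + (b : ℂ) / 2).re = 0 := by
  have hS0 : S ≠ 0 := ne_zero_of_norm_ne_zero (by simp [hS])
  rw [self_inversive_quartic_eq_sq_mul_re hS]
  simp only [mul_eq_zero, pow_eq_zero_iff two_ne_zero, hS0, ofReal_eq_zero, two_ne_zero,
    false_or]

theorem self_inversive_quartic_deriv_eq_zero_iff (hS : ‖S‖ = 1)
    (hP : S ^ 4 + a * S ^ 3 + (b : ℂ) * S ^ 2 + conj a * S + 1 = 0) :
    4 * S ^ 3 + 3 * a * S ^ 2 + 2 * (b : ℂ) * S + conj a = 0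
      ↔ (2 * S ^ 2 + a * S).im = 0 := by
  have hS0 : S ≠ 0 := ne_zero_of_norm_ne_zero (by simp [hS])
  rw [self_inversive_quartic_deriv_eq hS, hP, mul_zero, zero_add]
  simp only [mul_eq_zero, hS0, ofReal_eq_zero, two_ne_zero, I_ne_zero, false_or, or_false]

end SelfInversiveQuartic

end Complex

/-- A root `S` on the unit circle of the special quartic `S⁴ + aS³ + bS² + āS + 1`
(`a ∈ ℂ`, `b ∈ ℝ`) is degenerate (both the polynomial and its derivative vanish) iff
`Re (S² + aS + b/2) = 0` and `Im (2S² + aS) = 0`. -/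
theorem quartic_epd_on_unit_circle (a : ℂ) (b : ℝ) (S : ℂ) (hS : ‖S‖ = 1) :
    (S ^ 4 + a * S ^ 3 + (b : ℂ) * S ^ 2 + (starRingEnd ℂ a) * S + 1 = 0 ∧
       4 * S ^ 3 + 3 * a * S ^ 2 + 2 * (b : ℂ) * S + starRingEnd ℂ a = 0) ↔
      ((S ^ 2 + a * S + (b : ℂ) / 2).re = 0 ∧ (2 * S ^ 2 + a * S).im = 0) :=
  (and_congr_right (self_inversive_quartic_deriv_eq_zero_iff hS)).trans
    (and_congr_left' (self_inversive_quartic_eq_zero_iff hS))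
end
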